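/- Let X be a Tychonoff (completely regular Hausdorff) space. The following are equivalent: (i) X is an s_ℝ-space; (ii) X is strongly functionally generated by the family of all subsets of X of the form {x_n : n ∈ ℕ} ∪ {x}, where (x_n) is a sequence in X converging to x; (iii) X is functionally generated by that same family; (iv) X is the image of a metrizable locally compact space under an R-quotient map; (v) X is the image of a sequential space under an R-quotient map; (vi) X is the image of an s_ℝ-space under an R-quotient map. -/

import Mathlib

open Set Filter Topology

universe u

/-- A function `f : X → ℝ` is sequentially continuous if `f (x n) → f x` whenever a
sequence `(x n)` converges to `x` in `X`. -/
def SeqCont {X : Type*} [TopologicalSpace X] (f : X → ℝ) : Prop :=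
  ∀ (u : ℕ → X) (x : X), Tendsto u atTop (nhds x) →
    Tendsto (fun n => f (u n)) atTop (nhds (f x))

/-- A topological space `X` is an `s_ℝ`-space if every sequentially continuous real-valued
function on `X` is continuous. -/
def IsSRSpace (X : Type u) [TopologicalSpace X] : Prop :=
  ∀ f : X → ℝ, SeqCont f → Continuous f

/-- A map `p : Y → X` is `R`-quotient if it is continuous, surjective, and every function
`φ : X → ℝ` such that `φ ∘ p` is continuous is itself continuous. -/
def IsRQuotient {Y X : Type*} [TopologicalSpace Y] [TopologicalSpace X] (p : Y → X) : Prop :=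
  Continuous p ∧ Function.Surjective p ∧ ∀ φ : X → ℝ, Continuous (φ ∘ p) → Continuous φ

/-- `X` is strongly functionally generated by a family `𝓜` of subsets if every
discontinuous `f : X → ℝ` has a discontinuous restriction to some `M ∈ 𝓜`. -/
def StronglyFunctionallyGeneratedBy (X : Type u) [TopologicalSpace X] (𝓜 : Set (Set X)) : Prop :=
  ∀ f : X → ℝ, ¬ Continuous f → ∃ M ∈ 𝓜, ¬ Continuous fun x : M => f x

/-- `X` is functionally generated by a family `𝓜` of subsets if for every discontinuous
`f : X → ℝ` there is `M ∈ 𝓜` such that `f ↾ M` has no continuous extension to `X`. -/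
def FunctionallyGeneratedBy (X : Type u) [TopologicalSpace X] (𝓜 : Set (Set X)) : Prop :=
  ∀ f : X → ℝ, ¬ Continuous f →
    ∃ M ∈ 𝓜, ¬ ∃ g : X → ℝ, Continuous g ∧ ∀ x ∈ M, g x = f x

/-- The family of all convergent sequences in `X` together with their limit points. -/
def ConvSeqSets (X : Type u) [TopologicalSpace X] : Set (Set X) :=
  {S : Set X | ∃ (u : ℕ → X) (x : X), Tendsto u atTop (nhds x) ∧ S = Set.range u ∪ {x}}

section Aux

lemma sigma_metrizable {ι : Type*} (E : ι → Type*) [∀ i, TopologicalSpace (E i)]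
    [∀ i, TopologicalSpace.MetrizableSpace (E i)] :
    TopologicalSpace.MetrizableSpace (Σ i, E i) := by
  letI : ∀ i, MetricSpace (E i) := fun i => TopologicalSpace.metrizableSpaceMetric (E i)
  exact @EMetricSpace.metrizableSpace _ Metric.Sigma.metricSpace.toEMetricSpace

lemma sigma_locallyCompact {ι : Type*} (E : ι → Type*) [∀ i, TopologicalSpace (E i)]
    [∀ i, LocallyCompactSpace (E i)] : LocallyCompactSpace (Σ i, E i) := by
  constructor
  rintro ⟨i, x⟩ n hn
  have ho : Topology.IsOpenEmbedding (Sigma.mk i : E i → Σ j, E j) :=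
    Topology.IsOpenEmbedding.sigmaMk
  obtain ⟨s, hs, hsub, hcomp⟩ := LocallyCompactSpace.local_compact_nhds x (Sigma.mk i ⁻¹' n)
    (ho.continuous.continuousAt.preimage_mem_nhds hn)
  exact ⟨Sigma.mk i '' s, ho.isOpenMap.image_mem_nhds hs,
    by rintro _ ⟨y, hy, rfl⟩; exact hsub hy, hcomp.image continuous_sigmaMk⟩

lemma exists_extension_of_isCompact {X : Type*} [TopologicalSpace X] [CompletelyRegularSpace X]
    [T2Space X] {M : Set X} (hM : IsCompact M) {f : X → ℝ}
    (hf : Continuous fun m : M => f m) : ∃ g : X → ℝ, Continuous g ∧ ∀ x ∈ M, g x = f x := by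
  haveI : CompactSpace M := isCompact_iff_compactSpace.mp hM
  have hinj : Function.Injective (stoneCechUnit : X → StoneCech X) := by
    intro a b hab
    by_contra hne
    obtain ⟨φ, hφc, hφa, hφb⟩ := CompletelyRegularSpace.completely_regular a {b}
      isClosed_singleton (by simpa using hne)
    have h01 : (0 : unitInterval) = 1 := by
      rw [← hφa, eq_if_stoneCechUnit_eq hφc hab]; exact hφb rfl
    simpa using congrArg Subtype.val h01
  have hec : Continuous fun m : M => stoneCechUnit (m : X) :=
    continuous_stoneCechUnit.comp continuous_subtype_val
  have he : Topology.IsClosedEmbedding fun m : M => stoneCechUnit (m : X) :=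
    hec.isClosedEmbedding fun a b h => Subtype.ext (hinj h)
  obtain ⟨G, hG⟩ := (ContinuousMap.mk _ hf).exists_extension' he
  exact ⟨G ∘ stoneCechUnit, G.continuous.comp continuous_stoneCechUnit,
    fun x hx => congrFun hG ⟨x, hx⟩⟩

lemma range_convSeq {X : Type*} [TopologicalSpace X] {u : ℕ → X} {x : X}
    (hu : Tendsto u atTop (𝓝 x)) :
    Set.range (OnePoint.continuousMapMkNat u x hu) = Set.range u ∪ {x} := by
  ext y
  constructor
  · rintro ⟨z, rfl⟩
    cases z using OnePoint.rec with
    | infty => exact Or.inr rfl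
    | coe n => exact Or.inl ⟨n, rfl⟩
  · rintro (⟨n, rfl⟩ | rfl)
    · exact ⟨(n : OnePoint ℕ), rfl⟩
    · exact ⟨OnePoint.infty, rfl⟩

lemma isCompact_convSeq {X : Type*} [TopologicalSpace X] {u : ℕ → X} {x : X}
    (hu : Tendsto u atTop (𝓝 x)) : IsCompact (Set.range u ∪ {x}) := by
  rw [← range_convSeq hu]
  exact isCompact_range (OnePoint.continuousMapMkNat u x hu).continuous

lemma continuous_restrict_convSeq {X : Type*} [TopologicalSpace X] [T2Space X] {u : ℕ → X} {x : X}
    (hu : Tendsto u atTop (𝓝 x)) {f : X → ℝ}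
    (hf : Tendsto (fun n => f (u n)) atTop (𝓝 (f x))) :
    Continuous fun m : (Set.range u ∪ {x} : Set X) => f m := by
  set M : Set X := Set.range u ∪ {x} with hM
  set q : C(OnePoint ℕ, X) := OnePoint.continuousMapMkNat u x hu with hq
  have hmem : ∀ z, q z ∈ M := fun z => (range_convSeq hu).le ⟨z, rfl⟩
  set q' : OnePoint ℕ → M := fun z => ⟨q z, hmem z⟩ with hq'
  have hq'c : Continuous q' := q.continuous.subtype_mk _
  have hq's : Function.Surjective q' := by
    rintro ⟨y, hy⟩
    rw [hM, ← range_convSeq hu] at hy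
    obtain ⟨z, hz⟩ := hy
    exact ⟨z, Subtype.ext hz⟩
  have hquot : Topology.IsQuotientMap q' :=
    (hq'c.isClosedMap).isQuotientMap hq'c hq's
  rw [hquot.continuous_iff]
  exact (OnePoint.continuous_iff_from_nat _).mpr hf

end Aux

theorem sR_space_tfae (X : Type u) [TopologicalSpace X] [CompletelyRegularSpace X] [T2Space X] :
    List.TFAE
      [ IsSRSpace X,
        StronglyFunctionallyGeneratedBy X (ConvSeqSets X),
        FunctionallyGeneratedBy X (ConvSeqSets X),
        ∃ (Y : Type u) (_ : TopologicalSpace Y) (_ : TopologicalSpace.MetrizableSpace Y)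
          (_ : LocallyCompactSpace Y), ∃ p : Y → X, IsRQuotient p,
        ∃ (Y : Type u) (_ : TopologicalSpace Y) (_ : SequentialSpace Y),
          ∃ p : Y → X, IsRQuotient p,
        ∃ (Y : Type u) (_ : TopologicalSpace Y), IsSRSpace Y ∧ ∃ p : Y → X, IsRQuotient p ] := by
  tfae_have 1 → 2 := by
    intro h1 f hf
    have hns : ¬ SeqCont f := fun hs => hf (h1 f hs)
    unfold SeqCont at hns
    push_neg at hns
    obtain ⟨u, x, hux, hfx⟩ := hns
    refine ⟨Set.range u ∪ {x}, ⟨u, x, hux, rfl⟩, fun hc => hfx ?_⟩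
    have hxm : x ∈ Set.range u ∪ {x} := Or.inr rfl
    have hum : ∀ n, u n ∈ Set.range u ∪ {x} := fun n => Or.inl ⟨n, rfl⟩
    have hv : Tendsto (fun n => (⟨u n, hum n⟩ : (Set.range u ∪ {x} : Set X)))
        atTop (𝓝 ⟨x, hxm⟩) := by
      rw [tendsto_subtype_rng]
      exact hux
    exact (hc.tendsto ⟨x, hxm⟩).comp hv
  tfae_have 2 → 3 := by
    intro h2 f hf
    obtain ⟨M, hM, hdisc⟩ := h2 f hf
    refine ⟨M, hM, fun ⟨g, hg, hgf⟩ => hdisc ?_⟩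
    have he : (fun m : M => f m) = fun m : M => g m := funext fun m => (hgf m m.2).symm
    rw [he]
    exact hg.comp continuous_subtype_val
  tfae_have 3 → 1 := by
    intro h3 f hf
    by_contra hc
    obtain ⟨M, ⟨u, x, hux, rfl⟩, hext⟩ := h3 f hc
    exact hext (exists_extension_of_isCompact (isCompact_convSeq hux)
      (continuous_restrict_convSeq hux (hf u x hux)))
  tfae_have 1 → 4 := by
    intro h1
    refine ⟨Σ _ : {s : (ℕ → X) × X // Tendsto s.1 atTop (𝓝 s.2)}, OnePoint ℕ, inferInstance,
      sigma_metrizable _, sigma_locallyCompact _,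
      fun w => OnePoint.continuousMapMkNat w.1.1.1 w.1.1.2 w.1.2 w.2, ?_, ?_, ?_⟩
    · exact continuous_sigma fun s => (OnePoint.continuousMapMkNat s.1.1 s.1.2 s.2).continuous
    · intro x
      exact ⟨⟨⟨⟨fun _ => x, x⟩, tendsto_const_nhds⟩, OnePoint.infty⟩, rfl⟩
    · intro φ hφ
      apply h1 φ
      intro u x hux
      have hc := hφ.comp (continuous_sigmaMk (σ := fun _ => OnePoint ℕ) (i := ⟨⟨u, x⟩, hux⟩))
      exact (OnePoint.continuous_iff_from_nat _).mp hc
  tfae_have 4 → 5 := by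
    rintro ⟨Y, tY, mY, lY, p, hp⟩
    exact ⟨Y, tY, inferInstance, p, hp⟩
  tfae_have 5 → 6 := by
    rintro ⟨Y, tY, sY, p, hp⟩
    refine ⟨Y, tY, fun f hf => ?_, p, hp⟩
    exact SeqContinuous.continuous fun u x h => hf u x h
  tfae_have 6 → 1 := by
    rintro ⟨Y, tY, hY, p, hpc, hps, hpq⟩
    intro f hf
    apply hpq
    apply hY
    intro u y huy
    exact hf (p ∘ u) (p y) ((hpc.tendsto y).comp huy)
  tfae_finish
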